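/- Suppose w_1,...,w_{n−1} is a palindrome (w_i = w_{n−i}) of real numbers, n even, n = 2k. Then Q_n = (Q_{k+1} − Q_{k−1})·Q_k, where all continuants are evaluated at (w_1, w_2, ...). -/

import Mathlib

/-!
Both solutions of the recurrence `X_{t+1} = w_t X_t - X_{t-1}` started at index `k` are
continuants of shifted words, which gives the splitting formula
`Q_{k+1+j} = Q_{j+1}(w_{k+1},…) Q_{k+1} - Q_j(w_{k+2},…) Q_k`. Continuants are invariant under
reversing the word. For `n = 2k` split at `k`: by the palindrome property the two shifted words
are the reverses of `w_1,…,w_{k-1}` and `w_1,…,w_{k-2}`, so `Q_{2k} = Q_k Q_{k+1} - Q_{k-1} Q_k`.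
-/

/-- The signed continuant polynomials: `contQ w t = Q_t(w_1,…,w_{t-1})`,
with `Q_{-1} = -1`, `Q_0 = 0`, `Q_{t+1} = w_t Q_t - Q_{t-1}` (so `Q_1 = 1`). -/
def contQ (w : ℕ → ℝ) : ℕ → ℝ
  | 0 => 0
  | 1 => 1
  | (t+2) => w (t+1) * contQ w (t+1) - contQ w t

@[simp] theorem contQ_zero (w : ℕ → ℝ) : contQ w 0 = 0 := rfl

@[simp] theorem contQ_one (w : ℕ → ℝ) : contQ w 1 = 1 := rfl

theorem contQ_add_two (w : ℕ → ℝ) (t : ℕ) :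
    contQ w (t + 2) = w (t + 1) * contQ w (t + 1) - contQ w t := rfl

theorem contQ_add (w : ℕ → ℝ) (k j : ℕ) :
    contQ w (k + 1 + j) =
      contQ (fun i => w (i + k)) (j + 1) * contQ w (k + 1) -
        contQ (fun i => w (i + (k + 1))) j * contQ w k := by
  induction j using Nat.twoStepInduction with
  | zero => simp
  | one => simp [contQ, add_comm]
  | more j ih₀ ih₁ =>
    rw [show k + 1 + (j + 2) = k + 1 + j + 2 by omega, contQ_add_two,
      show k + 1 + j + 1 = k + 1 + (j + 1) by omega, ih₀, ih₁,
      contQ_add_two (fun i => w (i + k)) (j + 1), contQ_add_two (fun i => w (i + (k + 1))) j,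
      show j + 1 + 1 + k = k + 1 + (j + 1) by omega, show j + 1 + (k + 1) = k + 1 + (j + 1) by omega]
    ring

theorem contQ_eq_of_reverse (t : ℕ) (v w : ℕ → ℝ)
    (hvw : ∀ i, 1 ≤ i → i < t → v i = w (t - i)) : contQ v t = contQ w t := by
  induction t using Nat.twoStepInduction generalizing v with
  | zero => rfl
  | one => rfl
  | more t ih₀ ih₁ =>
    have hv₁ : v 1 = w (t + 1) := hvw 1 le_rfl (by omega)
    have hshift₁ : contQ (fun i => v (i + 1)) (t + 1) = contQ w (t + 1) :=
      ih₁ _ fun i hi hit => by rw [hvw (i + 1) (by omega) (by omega)]; congr 1; omega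
    have hshift₂ : contQ (fun i => v (i + (1 + 1))) t = contQ w t :=
      ih₀ _ fun i hi hit => by rw [hvw (i + 2) (by omega) (by omega)]; congr 1; omega
    have hsplit := contQ_add v 1 t
    rw [show 1 + 1 + t = t + 2 by omega, hshift₁, hshift₂] at hsplit
    rw [hsplit, contQ_add_two w t, contQ_add_two v 0, hv₁, contQ_one, contQ_zero]
    ring

theorem contQ_factor_even_general (w : ℕ → ℝ) (k : ℕ)
    (hpal : ∀ i, 1 ≤ i → i ≤ 2 * k - 1 → w i = w (2 * k - i)) :
    contQ w (2 * k) =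
      (contQ w (k + 1) - contQ w (k - 1)) * contQ w k := by
  rcases k with _ | m
  · simp
  have hsplit := contQ_add w (m + 1) m
  have hleft : contQ (fun i => w (i + (m + 1))) (m + 1) = contQ w (m + 1) :=
    contQ_eq_of_reverse _ _ _ fun i hi him => by
      rw [hpal (i + (m + 1)) (by omega) (by omega)]; congr 1; omega
  have hright : contQ (fun i => w (i + (m + 1 + 1))) m = contQ w m :=
    contQ_eq_of_reverse _ _ _ fun i hi him => by
      rw [hpal (i + (m + 1 + 1)) (by omega) (by omega)]; congr 1; omega
  rw [show m + 1 + 1 + m = 2 * (m + 1) by omega, hleft, hright] at hsplit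
  rw [hsplit, Nat.add_sub_cancel]
  ring

/-- If `w_1,…,w_{n-1}` is a palindrome and `n = 2k` is even, then
`Q_n = (Q_{k+1} - Q_{k-1})·Q_k`. -/
theorem contQ_factor_even (w : ℕ → ℝ) (k : ℕ) (hk : 1 ≤ k)
    (hpal : ∀ i, 1 ≤ i → i ≤ 2 * k - 1 → w i = w (2 * k - i)) :
    contQ w (2 * k) =
      (contQ w (k + 1) - contQ w (k - 1)) * contQ w k :=
  contQ_factor_even_general w k hpal
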